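/- arXiv:1407.4853 — 8 statements merged into one kernel-verified Lean document; each statement's English description precedes it below -/
import Mathlib

section
/- Let ξ : (𝔤, ⟨·,·⟩_𝔤) → (𝔥, ⟨·,·⟩_𝔥) be a linear map between finite-dimensional Euclidean Lie algebras, let B be the Levi-Civita product of 𝔥, and define U^ξ = Σ_i B_{ξ(e_i)} ξ(e_i) for an orthonormal basis (e_i) of 𝔤. Then for every u ∈ 𝔥, ⟨U^ξ, u⟩_𝔥 = tr(ξ* ∘ ad_u ∘ ξ), where ξ* is the adjoint of ξ with respect to the inner products. -/
/-!
Taking `v = w` in the Koszul formula, `[v, v] = 0` and the two remaining terms coincide, so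
`⟨B_v v, u⟩ = ⟨[u, v], v⟩`. Summed over `v = ξ(e_i)`, the right-hand side becomes
`Σ_i ⟨e_i, ξ*(ad_u (ξ e_i))⟩`, the trace of `ξ* ∘ ad_u ∘ ξ` computed in the orthonormal
basis `(e_i)`.
-/

theorem koszul_apply_self {K L : Type*} [Field K] [CharZero K] [LieRing L] [LieAlgebra K L]
    {β : LinearMap.BilinForm K L} {B : L →ₗ[K] L →ₗ[K] L}
    (hB : ∀ u v w : L, 2 * β (B u v) w = β ⁅u, v⁆ w + β ⁅w, u⁆ v + β ⁅w, v⁆ u)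
    (u v : L) : β (B v v) u = β ⁅u, v⁆ v := by
  have h := hB v v u
  rw [lie_self, map_zero, LinearMap.zero_apply, zero_add, ← two_mul] at h
  exact mul_left_cancel₀ two_ne_zero h

namespace LinearMap.BilinForm

variable {R M ι : Type*} [CommRing R] [AddCommGroup M] [Module R M] [Fintype ι] [DecidableEq ι]
  {β : LinearMap.BilinForm R M} {b : Module.Basis ι R M}

theorem apply_basis_eq_repr (hb : ∀ i j, β (b i) (b j) = if i = j then 1 else 0)
    (i : ι) (x : M) : β (b i) x = b.repr x i := by
  conv_lhs => rw [← b.sum_repr x]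
  simp only [map_sum, map_smul, smul_eq_mul, hb, mul_ite, mul_one, mul_zero,
    Finset.sum_ite_eq, Finset.mem_univ, if_true]

theorem trace_eq_sum_apply_basis (hb : ∀ i j, β (b i) (b j) = if i = j then 1 else 0)
    (f : M →ₗ[R] M) : trace R M f = ∑ i : ι, β (b i) (f (b i)) := by
  simp only [trace_eq_matrix_trace R b, Matrix.trace, Matrix.diag_apply, LinearMap.toMatrix_apply,
    apply_basis_eq_repr hb]

end LinearMap.BilinForm

theorem stmt_2_general {g h : Type*}
    [LieRing g] [LieAlgebra ℝ g]
    [LieRing h] [LieAlgebra ℝ h]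
    {ι : Type*} [Fintype ι] [DecidableEq ι]
    (ipg : LinearMap.BilinForm ℝ g)
    (iph : LinearMap.BilinForm ℝ h)
    (hhsymm : ∀ x y : h, iph x y = iph y x)
    (ξ : g →ₗ[ℝ] h) (ξstar : h →ₗ[ℝ] g)
    (hadj : ∀ (x : g) (y : h), iph (ξ x) y = ipg x (ξstar y))
    (B : h →ₗ[ℝ] h →ₗ[ℝ] h)
    (hB : ∀ u v w : h, 2 * iph (B u v) w = iph ⁅u, v⁆ w + iph ⁅w, u⁆ v + iph ⁅w, v⁆ u)
    (b : Module.Basis ι ℝ g)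
    (hb : ∀ i j, ipg (b i) (b j) = if i = j then 1 else 0) :
    ∀ u : h, iph (∑ i, B (ξ (b i)) (ξ (b i))) u
      = LinearMap.trace ℝ g (ξstar ∘ₗ LieAlgebra.ad ℝ h u ∘ₗ ξ) := by
  intro u
  rw [LinearMap.BilinForm.trace_eq_sum_apply_basis hb, map_sum, LinearMap.sum_apply]
  refine Finset.sum_congr rfl fun i _ => ?_
  rw [koszul_apply_self hB, hhsymm, hadj]
  rfl

/-- For a linear map ξ between Euclidean Lie algebras, with B the Levi-Civita product
of the target and U^ξ = Σ_i B_{ξ(e_i)} ξ(e_i), one has ⟨U^ξ, u⟩ = tr(ξ* ∘ ad_u ∘ ξ). -/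
theorem stmt_2 {g h : Type*}
    [LieRing g] [LieAlgebra ℝ g] [FiniteDimensional ℝ g]
    [LieRing h] [LieAlgebra ℝ h] [FiniteDimensional ℝ h]
    {ι : Type*} [Fintype ι] [DecidableEq ι]
    (ipg : LinearMap.BilinForm ℝ g)
    (hgsymm : ∀ x y : g, ipg x y = ipg y x)
    (hgpos : ∀ x : g, x ≠ 0 → 0 < ipg x x)
    (iph : LinearMap.BilinForm ℝ h)
    (hhsymm : ∀ x y : h, iph x y = iph y x)
    (hhpos : ∀ x : h, x ≠ 0 → 0 < iph x x)
    (ξ : g →ₗ[ℝ] h) (ξstar : h →ₗ[ℝ] g)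
    (hadj : ∀ (x : g) (y : h), iph (ξ x) y = ipg x (ξstar y))
    (B : h →ₗ[ℝ] h →ₗ[ℝ] h)
    (hB : ∀ u v w : h, 2 * iph (B u v) w = iph ⁅u, v⁆ w + iph ⁅w, u⁆ v + iph ⁅w, v⁆ u)
    (b : Module.Basis ι ℝ g)
    (hb : ∀ i j, ipg (b i) (b j) = if i = j then 1 else 0) :
    ∀ u : h, iph (∑ i, B (ξ (b i)) (ξ (b i))) u
      = LinearMap.trace ℝ g (ξstar ∘ₗ LieAlgebra.ad ℝ h u ∘ₗ ξ) :=
  stmt_2_general ipg iph hhsymm ξ ξstar hadj B hB b hb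
end

section
/- Let ξ : (𝔤, ⟨·,·⟩_𝔤) → (𝔥, ⟨·,·⟩_𝔥) be a linear map between finite-dimensional Euclidean Lie algebras and U^ξ = Σ_i B_{ξ(e_i)} ξ(e_i) where B is the Levi-Civita product of 𝔥 and (e_i) an orthonormal basis of 𝔤. Then U^ξ is orthogonal to Kill(𝔥) := {u ∈ 𝔥 : ad_u + ad_u* = 0}. -/
/-!
By the Koszul formula, `2 ⟨B_v v, u⟩ = ⟨[v, v], u⟩ + 2 ⟨[u, v], v⟩ = 2 ⟨ad_u v, v⟩`, and the
quadratic form of a skew-symmetric `ad_u` vanishes. So every summand `B_{ξ(e_i)} ξ(e_i)` is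
already orthogonal to `Kill(𝔥)`.
-/

section

variable {h : Type*} [LieRing h] [LieAlgebra ℝ h] (iph : LinearMap.BilinForm ℝ h)

lemma inner_lie_apply_self_eq_zero_of_skew (hsymm : ∀ x y : h, iph x y = iph y x) {u : h}
    (hu : ∀ x y : h, iph ⁅u, x⁆ y + iph x ⁅u, y⁆ = 0) (v : h) : iph ⁅u, v⁆ v = 0 := by
  have := hu v v
  rw [hsymm v] at this
  linarith

lemma inner_leviCivita_self_eq_inner_lie {B : h →ₗ[ℝ] h →ₗ[ℝ] h}
    (hB : ∀ u v w : h, 2 * iph (B u v) w = iph ⁅u, v⁆ w + iph ⁅w, u⁆ v + iph ⁅w, v⁆ u)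
    (v w : h) : iph (B v v) w = iph ⁅w, v⁆ v := by
  have := hB v v w
  rw [lie_self, map_zero, LinearMap.zero_apply] at this
  linarith

lemma inner_leviCivita_self_eq_zero_of_skew (hsymm : ∀ x y : h, iph x y = iph y x)
    {B : h →ₗ[ℝ] h →ₗ[ℝ] h}
    (hB : ∀ u v w : h, 2 * iph (B u v) w = iph ⁅u, v⁆ w + iph ⁅w, u⁆ v + iph ⁅w, v⁆ u)
    {u : h} (hu : ∀ x y : h, iph ⁅u, x⁆ y + iph x ⁅u, y⁆ = 0) (v : h) :
    iph (B v v) u = 0 := by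
  rw [inner_leviCivita_self_eq_inner_lie iph hB,
    inner_lie_apply_self_eq_zero_of_skew iph hsymm hu]

end

theorem stmt_3_general {g h : Type*}
    [LieRing g] [LieAlgebra ℝ g]
    [LieRing h] [LieAlgebra ℝ h]
    {ι : Type*} [Fintype ι]
    (iph : LinearMap.BilinForm ℝ h)
    (hhsymm : ∀ x y : h, iph x y = iph y x)
    (ξ : g →ₗ[ℝ] h)
    (B : h →ₗ[ℝ] h →ₗ[ℝ] h)
    (hB : ∀ u v w : h, 2 * iph (B u v) w = iph ⁅u, v⁆ w + iph ⁅w, u⁆ v + iph ⁅w, v⁆ u)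
    (b : Module.Basis ι ℝ g) :
    ∀ u : h, (∀ x y : h, iph ⁅u, x⁆ y + iph x ⁅u, y⁆ = 0) →
      iph (∑ i, B (ξ (b i)) (ξ (b i))) u = 0 := by
  intro u hu
  rw [map_sum, LinearMap.sum_apply]
  exact Finset.sum_eq_zero fun i _ ↦ inner_leviCivita_self_eq_zero_of_skew iph hhsymm hB hu _

/-- For a linear map ξ between Euclidean Lie algebras, U^ξ = Σ_i B_{ξ(e_i)} ξ(e_i)
is orthogonal to Kill(𝔥) = {u : ad_u skew-symmetric}. -/
theorem stmt_3 {g h : Type*}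
    [LieRing g] [LieAlgebra ℝ g] [FiniteDimensional ℝ g]
    [LieRing h] [LieAlgebra ℝ h] [FiniteDimensional ℝ h]
    {ι : Type*} [Fintype ι] [DecidableEq ι]
    (ipg : LinearMap.BilinForm ℝ g)
    (hgsymm : ∀ x y : g, ipg x y = ipg y x)
    (hgpos : ∀ x : g, x ≠ 0 → 0 < ipg x x)
    (iph : LinearMap.BilinForm ℝ h)
    (hhsymm : ∀ x y : h, iph x y = iph y x)
    (hhpos : ∀ x : h, x ≠ 0 → 0 < iph x x)
    (ξ : g →ₗ[ℝ] h)
    (B : h →ₗ[ℝ] h →ₗ[ℝ] h)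
    (hB : ∀ u v w : h, 2 * iph (B u v) w = iph ⁅u, v⁆ w + iph ⁅w, u⁆ v + iph ⁅w, v⁆ u)
    (b : Module.Basis ι ℝ g)
    (hb : ∀ i j, ipg (b i) (b j) = if i = j then 1 else 0) :
    ∀ u : h, (∀ x y : h, iph ⁅u, x⁆ y + iph x ⁅u, y⁆ = 0) →
      iph (∑ i, B (ξ (b i)) (ξ (b i))) u = 0 :=
  stmt_3_general iph hhsymm ξ B hB b
end

section
/- Let ξ : 𝔤 → 𝔥 be a Lie algebra homomorphism between finite-dimensional Euclidean Lie algebras such that the metric on 𝔥 is bi-invariant (ad_u is skew-symmetric for all u ∈ 𝔥) and 𝔤 is unimodular (tr(ad_v) = 0 for all v ∈ 𝔤). Then τ(ξ) = U^ξ − ξ(U^𝔤) = 0, i.e., ξ is harmonic. -/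
/-!
On a unimodular Euclidean Lie algebra the vector `U^𝔤` has `⟨U^𝔤, U^𝔤⟩ = tr (ad U^𝔤) = 0`, so it
vanishes. For a bi-invariant metric the Koszul formula reduces to `⟨B u u, w⟩ = ⟨[w, u], u⟩`, and
`⟨[w, u], u⟩ = 0` by skew-symmetry of `ad w`; hence `B u u = 0` for every `u`, so `U^ξ = 0` too.
-/

namespace LinearMap.BilinForm

theorem eq_zero_of_apply_self_eq_zero {R M : Type*} [CommSemiring R] [Preorder R]
    [AddCommMonoid M] [Module R M] {φ : LinearMap.BilinForm R M} (hpos : ∀ x, x ≠ 0 → 0 < φ x x)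
    {x : M} (hx : φ x x = 0) : x = 0 := by
  by_contra hne
  exact (hpos x hne).ne' hx

variable {K L : Type*} [Field K] [LieRing L] [LieAlgebra K L] {φ : LinearMap.BilinForm K L}

theorem apply_lie_self_eq_zero [CharZero K] (hsymm : ∀ x y : L, φ x y = φ y x)
    (hinv : ∀ u x y : L, φ ⁅u, x⁆ y + φ x ⁅u, y⁆ = 0) (w u : L) : φ ⁅w, u⁆ u = 0 := by
  have h := hinv w u u
  rw [hsymm u] at h
  simpa using h

theorem levi_civita_apply_self_eq_zero [LinearOrder K] [IsStrictOrderedRing K]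
    (hsymm : ∀ x y : L, φ x y = φ y x) (hpos : ∀ x, x ≠ 0 → 0 < φ x x)
    (hinv : ∀ u x y : L, φ ⁅u, x⁆ y + φ x ⁅u, y⁆ = 0) (B : L →ₗ[K] L →ₗ[K] L)
    (hB : ∀ u v w : L, 2 * φ (B u v) w = φ ⁅u, v⁆ w + φ ⁅w, u⁆ v + φ ⁅w, v⁆ u) (u : L) :
    B u u = 0 := by
  refine eq_zero_of_apply_self_eq_zero hpos ?_
  have h := hB u u (B u u)
  rw [lie_self, map_zero, LinearMap.zero_apply, apply_lie_self_eq_zero hsymm hinv] at h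
  simpa using h

end LinearMap.BilinForm

theorem stmt_5_general {g h : Type*}
    [LieRing g] [LieAlgebra ℝ g]
    [LieRing h] [LieAlgebra ℝ h]
    {ι : Type*} [Fintype ι]
    (ipg : LinearMap.BilinForm ℝ g)
    (hgpos : ∀ x : g, x ≠ 0 → 0 < ipg x x)
    (iph : LinearMap.BilinForm ℝ h)
    (hhsymm : ∀ x y : h, iph x y = iph y x)
    (hhpos : ∀ x : h, x ≠ 0 → 0 < iph x x)
    (ξ : g →ₗ⁅ℝ⁆ h)
    (hbih : ∀ u x y : h, iph ⁅u, x⁆ y + iph x ⁅u, y⁆ = 0)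
    (hgun : ∀ v : g, LinearMap.trace ℝ g (LieAlgebra.ad ℝ g v) = 0)
    (B : h →ₗ[ℝ] h →ₗ[ℝ] h)
    (hB : ∀ u v w : h, 2 * iph (B u v) w = iph ⁅u, v⁆ w + iph ⁅w, u⁆ v + iph ⁅w, v⁆ u)
    (b : Module.Basis ι ℝ g)
    (Ug : g) (hUg : ∀ v : g, ipg Ug v = LinearMap.trace ℝ g (LieAlgebra.ad ℝ g v)) :
    (∑ i, B (ξ (b i)) (ξ (b i))) - ξ Ug = 0 := by
  have hUg0 : Ug = 0 := ipg.eq_zero_of_apply_self_eq_zero hgpos ((hUg Ug).trans (hgun Ug))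
  simp [hUg0, LinearMap.BilinForm.levi_civita_apply_self_eq_zero hhsymm hhpos hbih B hB]

/-- If the metric on 𝔥 is bi-invariant and 𝔤 is unimodular, then any Lie algebra
homomorphism ξ : 𝔤 → 𝔥 has vanishing tension τ(ξ) = U^ξ − ξ(U^𝔤) = 0 (ξ is harmonic). -/
theorem stmt_5 {g h : Type*}
    [LieRing g] [LieAlgebra ℝ g] [FiniteDimensional ℝ g]
    [LieRing h] [LieAlgebra ℝ h] [FiniteDimensional ℝ h]
    {ι : Type*} [Fintype ι] [DecidableEq ι]
    (ipg : LinearMap.BilinForm ℝ g)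
    (hgsymm : ∀ x y : g, ipg x y = ipg y x)
    (hgpos : ∀ x : g, x ≠ 0 → 0 < ipg x x)
    (iph : LinearMap.BilinForm ℝ h)
    (hhsymm : ∀ x y : h, iph x y = iph y x)
    (hhpos : ∀ x : h, x ≠ 0 → 0 < iph x x)
    (ξ : g →ₗ⁅ℝ⁆ h)
    (hbih : ∀ u x y : h, iph ⁅u, x⁆ y + iph x ⁅u, y⁆ = 0)
    (hgun : ∀ v : g, LinearMap.trace ℝ g (LieAlgebra.ad ℝ g v) = 0)
    (B : h →ₗ[ℝ] h →ₗ[ℝ] h)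
    (hB : ∀ u v w : h, 2 * iph (B u v) w = iph ⁅u, v⁆ w + iph ⁅w, u⁆ v + iph ⁅w, v⁆ u)
    (b : Module.Basis ι ℝ g)
    (hb : ∀ i j, ipg (b i) (b j) = if i = j then 1 else 0)
    (Ug : g) (hUg : ∀ v : g, ipg Ug v = LinearMap.trace ℝ g (LieAlgebra.ad ℝ g v)) :
    (∑ i, B (ξ (b i)) (ξ (b i))) - ξ Ug = 0 :=
  stmt_5_general ipg hgpos iph hhsymm hhpos ξ hbih hgun B hB b Ug hUg
end

section
/- Let (𝔤, ⟨·,·⟩) be a finite-dimensional Euclidean Lie algebra and let U^𝔤 ∈ 𝔤 be defined by ⟨U^𝔤, v⟩ = tr(ad_v) for all v. If for all u, v ∈ 𝔤 one has tr((ad_v + ad_v*) ∘ ad_u) = tr(ad_{ad_v* u}), then ad_{U^𝔤} + ad_{U^𝔤}* = 0 and U^𝔤 = 0; in particular 𝔤 is unimodular. -/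
/-!
Put `S = ad_U + ad_U*`. The hypothesis at `v = U` gives
`tr (S ∘ ad_u) = tr ad_{ad_U* u} = ⟨U, ad_U* u⟩ = ⟨[U, U], u⟩ = 0` for every `u`.
Traces of adjoint maps agree, so `tr (S ∘ ad_U*) = tr (ad_U ∘ S) = tr (S ∘ ad_U) = 0`, whence
`tr (S ∘ S) = 0`; for the self-adjoint `S` and a positive definite form this forces `S = 0`.
Then `tr ad_U = tr ad_U* = -tr ad_U`, so `⟨U, U⟩ = tr ad_U = 0`.
-/

namespace LinearMap.BilinForm

section Field

variable {K V ι : Type*} [Field K] [AddCommGroup V] [Module K V] {B : LinearMap.BilinForm K V}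

theorem basis_repr_eq_div_of_isOrthoᵢ [Fintype ι] {b : Module.Basis ι K V} (hb : B.IsOrthoᵢ b)
    {i : ι} (hbi : B (b i) (b i) ≠ 0) (x : V) :
    b.repr x i = B x (b i) / B (b i) (b i) := by
  refine eq_div_of_mul_eq hbi ?_
  conv_rhs => rw [← b.sum_repr x]
  rw [map_sum, LinearMap.sum_apply, Finset.sum_eq_single i (fun j _ hj => by simp [hb hj])
    (by simp)]
  simp

theorem trace_eq_sum_div_of_isOrthoᵢ [Fintype ι] [DecidableEq ι] {b : Module.Basis ι K V}
    (hb : B.IsOrthoᵢ b) (hbb : ∀ i, B (b i) (b i) ≠ 0) (f : V →ₗ[K] V) :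
    trace K V f = ∑ i, B (f (b i)) (b i) / B (b i) (b i) := by
  simp [trace_eq_matrix_trace K b, Matrix.trace, Matrix.diag, LinearMap.toMatrix_apply,
    basis_repr_eq_div_of_isOrthoᵢ hb (hbb _)]

theorem nondegenerate_of_pos [Preorder K] (hpos : ∀ x, x ≠ 0 → 0 < B x x) :
    B.Nondegenerate := by
  refine ⟨fun x hx => ?_, fun y hy => ?_⟩ <;> by_contra hne
  · exact (hpos x hne).ne' (hx x)
  · exact (hpos y hne).ne' (hy y)

theorem trace_eq_of_isAdjointPair [FiniteDimensional K V] (hB : B.Nondegenerate)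
    {A A' : V →ₗ[K] V} (h : IsAdjointPair B B A A') :
    trace K V A = trace K V A' := by
  have hconj : (B.toDual hB).conj A = Module.Dual.transpose (R := K) A' := by
    ext φ y
    obtain ⟨x, rfl⟩ := (B.toDual hB).surjective φ
    simp [LinearEquiv.conj_apply, toDual_def, h x y, Module.Dual.transpose_apply]
  rw [← trace_conj' A (B.toDual hB), hconj, trace_transpose']

end Field

section OrderedField

variable {K V : Type*} [Field K] [LinearOrder K] [IsStrictOrderedRing K] [AddCommGroup V]
  [Module K V] {B : LinearMap.BilinForm K V}

theorem eq_zero_of_trace_comp_self_eq_zero [FiniteDimensional K V] (hB : B.IsSymm)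
    (hpos : ∀ x, x ≠ 0 → 0 < B x x) {S : V →ₗ[K] V} (hS : IsAdjointPair B B S S)
    (htr : trace K V (S ∘ₗ S) = 0) : S = 0 := by
  let := invertibleOfNonzero (two_ne_zero : (2 : K) ≠ 0)
  obtain ⟨b, hb⟩ := exists_orthogonal_basis (isSymm_iff.mp hB)
  have hbb (i) : 0 < B (b i) (b i) := hpos _ (b.ne_zero i)
  have hnonneg (x : V) : 0 ≤ B x x := by
    rcases eq_or_ne x 0 with rfl | hx
    · simp
    · exact (hpos x hx).le
  have hsum : ∑ i, B (S (b i)) (S (b i)) / B (b i) (b i) = 0 := by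
    rw [← htr, trace_eq_sum_div_of_isOrthoᵢ hb fun i => (hbb i).ne']
    simp only [LinearMap.comp_apply, hS _ (b _)]
  have hterms := (Finset.sum_eq_zero_iff_of_nonneg fun i _ =>
    div_nonneg (hnonneg _) (hbb i).le).mp hsum
  refine b.ext fun i => ?_
  by_contra hne
  exact (div_pos (hpos _ hne) (hbb i)).ne' (hterms i (Finset.mem_univ i))

theorem add_eq_zero_of_trace_add_comp_eq_zero [FiniteDimensional K V] (hB : B.IsSymm)
    (hpos : ∀ x, x ≠ 0 → 0 < B x x) {A A' : V →ₗ[K] V} (h : IsAdjointPair B B A A')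
    (htr : trace K V ((A + A') ∘ₗ A) = 0) : A + A' = 0 := by
  have h' : IsAdjointPair B B A' A := fun x y => by rw [hB.eq, ← h y x, hB.eq]
  have hS : IsAdjointPair B B ⇑(A + A') ⇑(A + A') := fun x y => by
    simp only [LinearMap.add_apply, map_add, h x y, h' x y]
    ring
  have hswap : trace K V ((A + A') ∘ₗ A') = trace K V (A ∘ₗ (A + A')) :=
    trace_eq_of_isAdjointPair (nondegenerate_of_pos hpos) (h'.comp hS)
  refine eq_zero_of_trace_comp_self_eq_zero hB hpos hS ?_
  rw [LinearMap.comp_add, map_add, hswap, trace_comp_comm' (A + A') A, htr, add_zero]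

end OrderedField

end LinearMap.BilinForm

/-- If tr((ad_v + ad_v*) ∘ ad_u) = tr(ad_{ad_v* u}) for all u, v, then ad_{U^𝔤} is
skew-symmetric and U^𝔤 = 0; in particular 𝔤 is unimodular. -/
theorem stmt_8 {g : Type*} [LieRing g] [LieAlgebra ℝ g] [FiniteDimensional ℝ g]
    (ip : LinearMap.BilinForm ℝ g)
    (hsymm : ∀ x y : g, ip x y = ip y x)
    (hpos : ∀ x : g, x ≠ 0 → 0 < ip x x)
    (adstar : g → g →ₗ[ℝ] g)
    (hadstar : ∀ v x y : g, ip ⁅v, x⁆ y = ip x (adstar v y))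
    (U : g) (hU : ∀ v : g, ip U v = LinearMap.trace ℝ g (LieAlgebra.ad ℝ g v))
    (hyp : ∀ u v : g,
      LinearMap.trace ℝ g ((LieAlgebra.ad ℝ g v + adstar v) ∘ₗ LieAlgebra.ad ℝ g u)
        = LinearMap.trace ℝ g (LieAlgebra.ad ℝ g (adstar v u))) :
    LieAlgebra.ad ℝ g U + adstar U = 0 ∧ U = 0 ∧
      ∀ v : g, LinearMap.trace ℝ g (LieAlgebra.ad ℝ g v) = 0 := by
  have hadj : LinearMap.IsAdjointPair ip ip (LieAlgebra.ad ℝ g U) (adstar U) := hadstar U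
  have hskew : LieAlgebra.ad ℝ g U + adstar U = 0 := by
    refine LinearMap.BilinForm.add_eq_zero_of_trace_add_comp_eq_zero ⟨hsymm⟩ hpos hadj ?_
    rw [hyp U U, ← hU, ← hadstar, lie_self, map_zero, LinearMap.zero_apply]
  have htrU : LinearMap.trace ℝ g (LieAlgebra.ad ℝ g U) = 0 := by
    have htr := LinearMap.BilinForm.trace_eq_of_isAdjointPair
      (LinearMap.BilinForm.nondegenerate_of_pos hpos) hadj
    rw [eq_neg_of_add_eq_zero_right hskew, map_neg] at htr
    linarith
  have hU0 : U = 0 := by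
    by_contra hne
    exact (hpos U hne).ne' (by rw [hU, htrU])
  exact ⟨hskew, hU0, fun v => by rw [← hU, hU0, map_zero, LinearMap.zero_apply]⟩
end

section
/- Let (𝔤, ⟨·,·⟩) be a finite-dimensional Euclidean Lie algebra, and 𝔤_0 ⊂ 𝔤 a Lie subalgebra of codimension 1. Suppose both 𝔤 and 𝔤_0 are unimodular. Then the mean curvature vector H^{𝔤_0} = Σ_i (A_{e_i}e_i − A⁰_{e_i}e_i) vanishes, where (e_i) is an orthonormal basis of 𝔤_0, A is the Levi-Civita product of 𝔤, and A⁰ is the Levi-Civita product of 𝔤_0 with the restricted inner product. -/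
/-!
Setting `u = v` in the Koszul formula gives `⟪A_u u, w⟫ = ⟪[w, u], u⟫`, and likewise for `A⁰`
on `𝔤₀`; so the `𝔤₀`-components of `A_{e_i} e_i` and `A⁰_{e_i} e_i` agree and `H` is normal
to `𝔤₀`. For a normal vector `q`, `⟪H, q⟫ = Σ_i ⟪[q, e_i], e_i⟫`, which is the trace of `ad q`
computed in the orthogonal basis `(q, e_1, …, e_n)` of `𝔤` (its `q`-entry vanishes because
`[q, q] = 0`), and this trace is zero by unimodularity of `𝔤`.
-/

open Module LinearMap

namespace LinearMap.BilinForm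

variable {K V ι : Type*} [Field K] [AddCommGroup V] [Module K V] {B : LinearMap.BilinForm K V}

theorem apply_eq_zero_of_forall_basis {W : Type*} [AddCommGroup W] [Module K W] (φ : W →ₗ[K] V)
    (b : Basis ι K W) {q : V} (hq : ∀ i, B (φ (b i)) q = 0) (y : W) : B (φ y) q = 0 :=
  LinearMap.congr_fun (b.ext (f₁ := B.flip q ∘ₗ φ) (f₂ := 0) hq) y

variable [Fintype ι]

theorem basis_repr_mul_apply_self {F : Basis ι K V} (hF : B.iIsOrtho F) (v : V) (i : ι) :
    F.repr v i * B (F i) (F i) = B v (F i) := by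
  conv_rhs => rw [← F.sum_repr v]
  rw [map_sum, LinearMap.sum_apply, Finset.sum_eq_single i]
  · simp
  · intro j _ hji
    simp [hF hji]
  · simp

theorem trace_eq_sum_div_of_iIsOrtho {F : Basis ι K V} (hF : B.iIsOrtho F)
    (hFF : ∀ i, B (F i) (F i) ≠ 0) (f : V →ₗ[K] V) :
    trace K V f = ∑ i, B (f (F i)) (F i) / B (F i) (F i) := by
  classical
  rw [trace_eq_matrix_trace K F, Matrix.trace]
  refine Finset.sum_congr rfl fun i _ => ?_
  rw [Matrix.diag_apply, LinearMap.toMatrix_apply, eq_div_iff (hFF i), basis_repr_mul_apply_self hF]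

theorem trace_eq_add_sum_of_finrank_eq_card_add_one [DecidableEq ι] {b : ι → V}
    (hb : ∀ i j, B (b i) (b j) = if i = j then 1 else 0)
    (hcard : finrank K V = Fintype.card ι + 1) {q : V} (hqb : ∀ i, B q (b i) = 0)
    (hbq : ∀ i, B (b i) q = 0) (hqq : B q q ≠ 0) (f : V →ₗ[K] V) :
    trace K V f = B (f q) q / B q q + ∑ i, B (f (b i)) (b i) := by
  let e : Option ι → V := fun o => o.elim q b
  have he : B.iIsOrtho e := by
    rintro (_ | i) (_ | j) hij
    · exact absurd rfl hij
    · exact hqb j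
    · exact hbq i
    · exact (hb i j).trans (if_neg fun h => hij (congrArg some h))
  have hee : ∀ o, B (e o) (e o) ≠ 0 := by
    rintro (_ | i) <;> simp [e, hqq, hb]
  let F := basisOfLinearIndependentOfCardEqFinrank (linearIndependent_of_iIsOrtho he hee)
    (by simp [hcard])
  have hF : ⇑F = e := coe_basisOfLinearIndependentOfCardEqFinrank _ _
  rw [trace_eq_sum_div_of_iIsOrtho (hF ▸ he) (hF ▸ hee), Fintype.sum_option]
  simp [hF, e, hb]

theorem apply_sub_sum_smul_eq_zero [DecidableEq ι] {b : ι → V}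
    (hb : ∀ i j, B (b i) (b j) = if i = j then 1 else 0) (w : V) (i : ι) :
    B (b i) (w - ∑ j, B (b j) w • b j) = 0 := by
  simp [hb]

end LinearMap.BilinForm

section Koszul

open LinearMap.BilinForm

variable {L : Type*} [LieRing L] [LieAlgebra ℝ L] {ip : LinearMap.BilinForm ℝ L}

theorem leviCivita_apply_self {A : L →ₗ[ℝ] L →ₗ[ℝ] L}
    (hA : ∀ u v w : L, 2 * ip (A u v) w = ip ⁅u, v⁆ w + ip ⁅w, u⁆ v + ip ⁅w, v⁆ u) (u w : L) :
    ip (A u u) w = ip ⁅w, u⁆ u := by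
  have h := hA u u w
  rw [lie_self, map_zero, LinearMap.zero_apply] at h
  linarith

variable {g0 : LieSubalgebra ℝ L} {A : L →ₗ[ℝ] L →ₗ[ℝ] L} {A0 : g0 →ₗ[ℝ] g0 →ₗ[ℝ] g0}

theorem leviCivita_sub_apply_self_of_mem
    (hA : ∀ u v w : L, 2 * ip (A u v) w = ip ⁅u, v⁆ w + ip ⁅w, u⁆ v + ip ⁅w, v⁆ u)
    (hA0 : ∀ u v w : g0, 2 * ip (A0 u v : L) (w : L)
      = ip (⁅u, v⁆ : g0) (w : L) + ip (⁅w, u⁆ : g0) (v : L) + ip (⁅w, v⁆ : g0) (u : L))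
    (u x : g0) : ip (A u u - A0 u u) x = 0 := by
  rw [map_sub, LinearMap.sub_apply, leviCivita_apply_self hA, sub_eq_zero]
  -- `hA0` is the Koszul formula of `𝔤₀` for the restriction of `ip`
  exact (leviCivita_apply_self (ip := ip.compl₁₂ (g0.incl : g0 →ₗ[ℝ] L) g0.incl) hA0 u x).symm

theorem leviCivita_sub_apply_self_of_orthogonal
    (hA : ∀ u v w : L, 2 * ip (A u v) w = ip ⁅u, v⁆ w + ip ⁅w, u⁆ v + ip ⁅w, v⁆ u)
    {q : L} (hq : ∀ y : g0, ip y q = 0) (u : g0) : ip (A u u - A0 u u) q = ip ⁅q, u⁆ u := by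
  rw [map_sub, LinearMap.sub_apply, leviCivita_apply_self hA, hq, sub_zero]

theorem sum_apply_lie_basis_eq_trace_ad {ι : Type*} [Fintype ι] [DecidableEq ι]
    (hsymm : ∀ x y : L, ip x y = ip y x) (hpos : ∀ x : L, x ≠ 0 → 0 < ip x x)
    (hcodim : Module.finrank ℝ L = Module.finrank ℝ g0 + 1) (b : Module.Basis ι ℝ g0)
    (hb : ∀ i j, ip (b i : L) (b j : L) = if i = j then 1 else 0) {q : L}
    (hq : ∀ i, ip (b i : L) q = 0) :
    ∑ i, ip ⁅q, (b i : L)⁆ (b i) = LinearMap.trace ℝ L (LieAlgebra.ad ℝ L q) := by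
  rcases eq_or_ne q 0 with rfl | hq0
  · simp
  rw [trace_eq_add_sum_of_finrank_eq_card_add_one hb (by rw [hcodim, finrank_eq_card_basis b])
    (fun i => hsymm q _ ▸ hq i) hq (hpos q hq0).ne']
  simp

end Koszul

theorem stmt_9_general {g : Type*} [LieRing g] [LieAlgebra ℝ g]
    {ι : Type*} [Fintype ι] [DecidableEq ι]
    (ip : LinearMap.BilinForm ℝ g)
    (hsymm : ∀ x y : g, ip x y = ip y x)
    (hpos : ∀ x : g, x ≠ 0 → 0 < ip x x)
    (g0 : LieSubalgebra ℝ g)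
    (hcodim : Module.finrank ℝ g = Module.finrank ℝ g0 + 1)
    (hgun : ∀ v : g, LinearMap.trace ℝ g (LieAlgebra.ad ℝ g v) = 0)
    (A : g →ₗ[ℝ] g →ₗ[ℝ] g)
    (hA : ∀ u v w : g, 2 * ip (A u v) w = ip ⁅u, v⁆ w + ip ⁅w, u⁆ v + ip ⁅w, v⁆ u)
    (A0 : g0 →ₗ[ℝ] g0 →ₗ[ℝ] g0)
    (hA0 : ∀ u v w : g0, 2 * ip (A0 u v : g) (w : g)
      = ip (⁅u, v⁆ : g0) (w : g) + ip (⁅w, u⁆ : g0) (v : g) + ip (⁅w, v⁆ : g0) (u : g))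
    (b : Module.Basis ι ℝ g0)
    (hb : ∀ i j, ip (b i : g) (b j : g) = if i = j then 1 else 0) :
    ∑ i, (A (b i : g) (b i : g) - ((A0 (b i) (b i) : g0) : g)) = 0 := by
  set H := ∑ i, (A (b i : g) (b i : g) - ((A0 (b i) (b i) : g0) : g))
  have hH_tangent : ∀ x : g0, ip H x = 0 := fun x => by
    rw [map_sum, LinearMap.sum_apply]
    exact Finset.sum_eq_zero fun i _ => leviCivita_sub_apply_self_of_mem hA hA0 (b i) x
  have hH_normal : ∀ q, (∀ i, ip (b i : g) q = 0) → ip H q = 0 := fun q hq => by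
    have hq' := LinearMap.BilinForm.apply_eq_zero_of_forall_basis (g0.incl : g0 →ₗ[ℝ] g) b hq
    rw [map_sum, LinearMap.sum_apply]
    simp_rw [leviCivita_sub_apply_self_of_orthogonal hA hq']
    exact (sum_apply_lie_basis_eq_trace_ad hsymm hpos hcodim b hb hq).trans (hgun q)
  have hH : ∀ w, ip H w = 0 := fun w => by
    rw [← sub_add_cancel w (∑ j, ip (b j : g) w • (b j : g)), map_add,
      hH_normal _ (LinearMap.BilinForm.apply_sub_sum_smul_eq_zero hb w)]
    simp [hH_tangent]
  by_contra hne
  exact (hpos H hne).ne' (hH H)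

/-- A codimension-one subalgebra 𝔤₀ of a Euclidean Lie algebra 𝔤, with both 𝔤 and 𝔤₀
unimodular, has vanishing mean curvature vector H = Σ_i (A_{e_i}e_i − A⁰_{e_i}e_i). -/
theorem stmt_9 {g : Type*} [LieRing g] [LieAlgebra ℝ g] [FiniteDimensional ℝ g]
    {ι : Type*} [Fintype ι] [DecidableEq ι]
    (ip : LinearMap.BilinForm ℝ g)
    (hsymm : ∀ x y : g, ip x y = ip y x)
    (hpos : ∀ x : g, x ≠ 0 → 0 < ip x x)
    (g0 : LieSubalgebra ℝ g)
    (hcodim : Module.finrank ℝ g = Module.finrank ℝ g0 + 1)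
    (hgun : ∀ v : g, LinearMap.trace ℝ g (LieAlgebra.ad ℝ g v) = 0)
    (hg0un : ∀ v : g0, LinearMap.trace ℝ g0 (LieAlgebra.ad ℝ g0 v) = 0)
    (A : g →ₗ[ℝ] g →ₗ[ℝ] g)
    (hA : ∀ u v w : g, 2 * ip (A u v) w = ip ⁅u, v⁆ w + ip ⁅w, u⁆ v + ip ⁅w, v⁆ u)
    (A0 : g0 →ₗ[ℝ] g0 →ₗ[ℝ] g0)
    (hA0 : ∀ u v w : g0, 2 * ip (A0 u v : g) (w : g)
      = ip (⁅u, v⁆ : g0) (w : g) + ip (⁅w, u⁆ : g0) (v : g) + ip (⁅w, v⁆ : g0) (u : g))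
    (b : Module.Basis ι ℝ g0)
    (hb : ∀ i j, ip (b i : g) (b j : g) = if i = j then 1 else 0) :
    ∑ i, (A (b i : g) (b i : g) - ((A0 (b i) (b i) : g0) : g)) = 0 :=
  stmt_9_general ip hsymm hpos g0 hcodim hgun A hA A0 hA0 b hb
end

section
/- Let ξ : 𝔤 → 𝔥 be a surjective Lie algebra homomorphism between finite-dimensional Euclidean Lie algebras such that the restriction of ξ to (ker ξ)^⊥ is a linear isometry onto 𝔥 (ξ is a Riemannian submersion at the Lie algebra level). If both 𝔤 and 𝔥 are unimodular, then τ(ξ) = U^ξ − ξ(U^𝔤) = 0. -/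
/-!
Unimodularity of `𝔤` and positivity force `U^𝔤 = 0`. For the other term, the Koszul formula
gives `⟨B_u u, w⟩ = ⟨[w, u], u⟩`, so `⟨U^ξ, ξ x⟩ = ∑ᵢ ⟨ad (ξ x) (ξ eᵢ), ξ eᵢ⟩`. Let `σ` be the
horizontal lift, i.e. the inverse of `ξ` on `(ker ξ)^⊥`; it is the adjoint of `ξ`, so this sum is
the trace of `σ ∘ ad (ξ x) ∘ ξ`, which by cyclicity equals `tr (ad (ξ x)) = 0`. As `ξ` is onto,
`U^ξ` is orthogonal to all of `𝔥`, hence vanishes.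
-/

open LinearMap (BilinForm)

namespace LinearMap.BilinForm

theorem trace_eq_sum_of_orthonormal {R M : Type*} [CommRing R] [AddCommGroup M] [Module R M]
    {ι : Type*} [Fintype ι] [DecidableEq ι] {B : BilinForm R M} (b : Module.Basis ι R M)
    (hb : ∀ i j, B (b i) (b j) = if i = j then 1 else 0) (T : M →ₗ[R] M) :
    LinearMap.trace R M T = ∑ i, B (T (b i)) (b i) := by
  have hrepr : ∀ v i, b.repr v i = B v (b i) := fun v i => by
    conv_rhs => rw [← b.sum_repr v]
    simp only [map_sum, map_smul, LinearMap.sum_apply, LinearMap.smul_apply, hb, smul_eq_mul,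
      mul_ite, mul_one, mul_zero, Finset.sum_ite_eq', Finset.mem_univ, if_true]
  rw [LinearMap.trace_eq_matrix_trace R b, Matrix.trace]
  simp only [Matrix.diag_apply, LinearMap.toMatrix_apply, hrepr]

section Real

variable {M N : Type*} [AddCommGroup M] [Module ℝ M] [AddCommGroup N] [Module ℝ N]

theorem eq_zero_of_apply_self_eq_zero_s17 {B : BilinForm ℝ M} (hpos : ∀ x, x ≠ 0 → 0 < B x x)
    {v : M} (hv : B v v = 0) : v = 0 := by
  by_contra hne
  exact (hpos v hne).ne' hv

theorem isCompl_orthogonal_of_pos [FiniteDimensional ℝ M] {B : BilinForm ℝ M}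
    (hsymm : ∀ x y, B x y = B y x) (hpos : ∀ x, x ≠ 0 → 0 < B x x) (W : Submodule ℝ M) :
    IsCompl W (B.orthogonal W) := by
  have hrefl : B.IsRefl := fun x y hxy => by rwa [hsymm]
  refine (isCompl_orthogonal_iff_disjoint hrefl).2 (Submodule.disjoint_def.2 fun x hxW hxW' => ?_)
  exact eq_zero_of_apply_self_eq_zero_s17 hpos (hxW' x hxW)

theorem exists_rightInverse_mem_orthogonal_ker [FiniteDimensional ℝ M] {B : BilinForm ℝ M}
    (hsymm : ∀ x y, B x y = B y x) (hpos : ∀ x, x ≠ 0 → 0 < B x x) (f : M →ₗ[ℝ] N)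
    (hf : Function.Surjective f) :
    ∃ σ : N →ₗ[ℝ] M, f ∘ₗ σ = LinearMap.id ∧ ∀ y, σ y ∈ B.orthogonal (LinearMap.ker f) := by
  let P := B.orthogonal (LinearMap.ker f)
  let e := Submodule.quotientEquivOfIsCompl _ P (isCompl_orthogonal_of_pos hsymm hpos _)
  let q := f.quotKerEquivOfSurjective hf
  refine ⟨P.subtype ∘ₗ e.toLinearMap ∘ₗ q.symm.toLinearMap, ?_, fun y => (e (q.symm y)).2⟩
  ext y
  have hmk : Submodule.Quotient.mk (e (q.symm y) : M) = q.symm y :=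
    (Submodule.quotientEquivOfIsCompl_symm_apply _ _ _ _).symm.trans (e.symm_apply_apply _)
  change f (e (q.symm y)) = y
  rw [← LinearMap.quotKerEquivOfSurjective_apply_mk f hf, hmk]
  exact q.apply_symm_apply y

theorem apply_rightInverse_eq {ipM : BilinForm ℝ M} (hsymm : ∀ x y, ipM x y = ipM y x)
    {ipN : BilinForm ℝ N} {f : M →ₗ[ℝ] N}
    (hiso : ∀ x y : M, (∀ z, f z = 0 → ipM x z = 0) → (∀ z, f z = 0 → ipM y z = 0) →
      ipN (f x) (f y) = ipM x y)
    {σ : N →ₗ[ℝ] M} (hσ : f ∘ₗ σ = LinearMap.id)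
    (hσP : ∀ y, σ y ∈ ipM.orthogonal (LinearMap.ker f)) (y : N) (u : M) :
    ipM (σ y) u = ipN y (f u) := by
  have hfσ : ∀ y, f (σ y) = y := LinearMap.congr_fun hσ
  have horth : ∀ y z, f z = 0 → ipM (σ y) z = 0 := fun y z hz => by
    rw [hsymm]; exact hσP y z hz
  have hvert : f (u - σ (f u)) = 0 := by rw [map_sub, hfσ, sub_self]
  calc ipM (σ y) u = ipM (σ y) (σ (f u)) + ipM (σ y) (u - σ (f u)) := by
        rw [← map_add, add_sub_cancel]
    _ = ipN y (f u) := by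
        rw [horth y _ hvert, add_zero, ← hiso _ _ (horth y) (horth (f u)), hfσ, hfσ]

theorem trace_eq_sum_of_rightInverse_adjoint [FiniteDimensional ℝ M] [FiniteDimensional ℝ N]
    {ι : Type*} [Fintype ι] [DecidableEq ι] {ipM : BilinForm ℝ M} {ipN : BilinForm ℝ N}
    (b : Module.Basis ι ℝ M) (hb : ∀ i j, ipM (b i) (b j) = if i = j then 1 else 0)
    {f : M →ₗ[ℝ] N} {σ : N →ₗ[ℝ] M} (hσ : f ∘ₗ σ = LinearMap.id)
    (hadj : ∀ y u, ipM (σ y) u = ipN y (f u)) (A : N →ₗ[ℝ] N) :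
    LinearMap.trace ℝ N A = ∑ i, ipN (A (f (b i))) (f (b i)) := by
  calc LinearMap.trace ℝ N A = LinearMap.trace ℝ N ((A ∘ₗ f) ∘ₗ σ) := by
        rw [LinearMap.comp_assoc, hσ, LinearMap.comp_id]
    _ = LinearMap.trace ℝ M (σ ∘ₗ A ∘ₗ f) := (LinearMap.trace_comp_comm' _ _).symm
    _ = ∑ i, ipN (A (f (b i))) (f (b i)) := by
        simp [trace_eq_sum_of_orthonormal b hb, hadj]

end Real

end LinearMap.BilinForm

open LinearMap.BilinForm

theorem leviCivita_self_apply {L : Type*} [LieRing L] [LieAlgebra ℝ L] {ip : BilinForm ℝ L}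
    {B : L →ₗ[ℝ] L →ₗ[ℝ] L}
    (hB : ∀ u v w : L, 2 * ip (B u v) w = ip ⁅u, v⁆ w + ip ⁅w, u⁆ v + ip ⁅w, v⁆ u) (u w : L) :
    ip (B u u) w = ip ⁅w, u⁆ u := by
  have h := hB u u w
  rw [lie_self, map_zero, LinearMap.zero_apply, zero_add] at h
  linarith

theorem stmt_17_general {g h : Type*}
    [LieRing g] [LieAlgebra ℝ g] [FiniteDimensional ℝ g]
    [LieRing h] [LieAlgebra ℝ h] [FiniteDimensional ℝ h]
    {ι : Type*} [Fintype ι] [DecidableEq ι]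
    (ipg : LinearMap.BilinForm ℝ g)
    (hgsymm : ∀ x y : g, ipg x y = ipg y x)
    (hgpos : ∀ x : g, x ≠ 0 → 0 < ipg x x)
    (iph : LinearMap.BilinForm ℝ h)
    (hhpos : ∀ x : h, x ≠ 0 → 0 < iph x x)
    (ξ : g →ₗ⁅ℝ⁆ h)
    (hsurj : Function.Surjective ξ)
    (hiso : ∀ x y : g, (∀ z : g, ξ z = 0 → ipg x z = 0) →
      (∀ z : g, ξ z = 0 → ipg y z = 0) → iph (ξ x) (ξ y) = ipg x y)
    (hgun : ∀ v : g, LinearMap.trace ℝ g (LieAlgebra.ad ℝ g v) = 0)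
    (hhun : ∀ v : h, LinearMap.trace ℝ h (LieAlgebra.ad ℝ h v) = 0)
    (B : h →ₗ[ℝ] h →ₗ[ℝ] h)
    (hB : ∀ u v w : h, 2 * iph (B u v) w = iph ⁅u, v⁆ w + iph ⁅w, u⁆ v + iph ⁅w, v⁆ u)
    (b : Module.Basis ι ℝ g)
    (hb : ∀ i j, ipg (b i) (b j) = if i = j then 1 else 0)
    (Ug : g) (hUg : ∀ v : g, ipg Ug v = LinearMap.trace ℝ g (LieAlgebra.ad ℝ g v)) :
    (∑ i, B (ξ (b i)) (ξ (b i))) - ξ Ug = 0 := by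
  have hUg0 : Ug = 0 := eq_zero_of_apply_self_eq_zero_s17 hgpos (by rw [hUg, hgun])
  obtain ⟨σ, hσ, hσP⟩ :=
    exists_rightInverse_mem_orthogonal_ker hgsymm hgpos (ξ : g →ₗ[ℝ] h) hsurj
  have hadj := apply_rightInverse_eq hgsymm hiso hσ hσP
  have horth : ∀ x, iph (∑ i, B (ξ (b i)) (ξ (b i))) (ξ x) = 0 := fun x => by
    simp only [map_sum, LinearMap.sum_apply, leviCivita_self_apply hB]
    rw [← hhun (ξ x), trace_eq_sum_of_rightInverse_adjoint b hb hσ hadj]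
    simp only [LieAlgebra.ad_apply, LieHom.coe_toLinearMap]
  obtain ⟨x, hx⟩ := hsurj (∑ i, B (ξ (b i)) (ξ (b i)))
  have hS := horth x
  rw [hx] at hS
  rw [eq_zero_of_apply_self_eq_zero_s17 hhpos hS, hUg0, map_zero, sub_zero]

/-- A Riemannian submersion (at the Lie algebra level) ξ : 𝔤 → 𝔥 between unimodular
Euclidean Lie algebras has vanishing tension τ(ξ) = U^ξ − ξ(U^𝔤) = 0. -/
theorem stmt_17 {g h : Type*}
    [LieRing g] [LieAlgebra ℝ g] [FiniteDimensional ℝ g]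
    [LieRing h] [LieAlgebra ℝ h] [FiniteDimensional ℝ h]
    {ι : Type*} [Fintype ι] [DecidableEq ι]
    (ipg : LinearMap.BilinForm ℝ g)
    (hgsymm : ∀ x y : g, ipg x y = ipg y x)
    (hgpos : ∀ x : g, x ≠ 0 → 0 < ipg x x)
    (iph : LinearMap.BilinForm ℝ h)
    (hhsymm : ∀ x y : h, iph x y = iph y x)
    (hhpos : ∀ x : h, x ≠ 0 → 0 < iph x x)
    (ξ : g →ₗ⁅ℝ⁆ h)
    (hsurj : Function.Surjective ξ)
    (hiso : ∀ x y : g, (∀ z : g, ξ z = 0 → ipg x z = 0) →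
      (∀ z : g, ξ z = 0 → ipg y z = 0) → iph (ξ x) (ξ y) = ipg x y)
    (hgun : ∀ v : g, LinearMap.trace ℝ g (LieAlgebra.ad ℝ g v) = 0)
    (hhun : ∀ v : h, LinearMap.trace ℝ h (LieAlgebra.ad ℝ h v) = 0)
    (B : h →ₗ[ℝ] h →ₗ[ℝ] h)
    (hB : ∀ u v w : h, 2 * iph (B u v) w = iph ⁅u, v⁆ w + iph ⁅w, u⁆ v + iph ⁅w, v⁆ u)
    (b : Module.Basis ι ℝ g)
    (hb : ∀ i j, ipg (b i) (b j) = if i = j then 1 else 0)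
    (Ug : g) (hUg : ∀ v : g, ipg Ug v = LinearMap.trace ℝ g (LieAlgebra.ad ℝ g v)) :
    (∑ i, B (ξ (b i)) (ξ (b i))) - ξ Ug = 0 :=
  stmt_17_general ipg hgsymm hgpos iph hhpos ξ hsurj hiso hgun hhun B hB b hb Ug hUg
end

section
/- Let 𝔤 = 𝔫 ⊕ 𝔥 be the Euclidean Lie algebra built from Euclidean Lie algebras 𝔫 and 𝔥, a representation by derivations ρ : 𝔥 → Der(𝔫), and ω = 0 (semidirect product), with the orthogonal direct sum inner product, and let π : 𝔤 → 𝔥 be the projection. Then the mean curvature vector H of the inclusion 𝔫 ⊂ 𝔤 satisfies ⟨π(H), h⟩_𝔥 = tr(ρ(h)) for all h ∈ 𝔥; consequently τ(π) = τ(Id_𝔥) − H^ρ where H^ρ ∈ 𝔥 is defined by ⟨H^ρ, h⟩ = tr(ρ(h)). In particular, if tr(ρ(h)) = 0 for all h and the two inner products on 𝔥 coincide, then π is harmonic. -/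
/-!
Lift the orthonormal basis `c` of `𝔥` to horizontal vectors `e j`; together with the orthonormal
basis `f` of `𝔫 = ker π` they form an orthonormal basis of `𝔤`, in which every trace or diagonal
sum on `𝔤` may be computed. For horizontal `u`, `tr (ad u)` then splits into the `𝔫`-part
`tr ρ(π u) = ⟨H^ρ, π u⟩` and the horizontal part `∑ ⟨[u, e j], e j⟩ = ∑ ⟨[π u, c j], c j⟩`
(only the horizontal part of `[u, e j]` pairs with `e j`), which Koszul's formula turns into
`⟨∑ A₁(c j, c j), π u⟩`; hence `π U^𝔤 = ∑ A₁(c j, c j) + H^ρ`. The diagonal sum of `B(π ·, π ·)`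
over `b` equals the one over `f ⊔ e`, namely `∑ B(c j, c j)`, and subtracting gives
`τ(π) = τ(Id) - H^ρ`. When the two metrics agree, Koszul's formula forces `B = A₁`, so
`τ(Id) = 0`.
-/

open LinearMap (BilinForm)
open Submodule (span)

namespace LinearMap.BilinForm

variable {V M : Type*} [AddCommGroup V] [Module ℝ V] [AddCommGroup M] [Module ℝ M]
  {ip : BilinForm ℝ V} {γ δ : Type*} [Fintype γ] [DecidableEq γ] [Fintype δ] [DecidableEq δ]

variable (ip) in
def IsOrthonormal (F : γ → V) : Prop :=
  ∀ i j, ip (F i) (F j) = if i = j then 1 else 0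

lemma eq_zero_of_apply_self_eq_zero_s18 (hpos : ∀ x, x ≠ 0 → 0 < ip x x) {x : V}
    (hx : ip x x = 0) : x = 0 := by
  by_contra hne
  exact (hpos x hne).ne' hx

lemma eq_of_forall_apply_eq (hpos : ∀ x, x ≠ 0 → 0 < ip x x) {x y : V}
    (h : ∀ w, ip x w = ip y w) : x = y :=
  sub_eq_zero.1 <| eq_zero_of_apply_self_eq_zero_s18 hpos <| by simp [h]

namespace IsOrthonormal

variable {F : γ → V} {G : δ → V}

lemma apply_sum_smul (hF : ip.IsOrthonormal F) (a : γ → ℝ) (m : γ) :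
    ip (∑ k, a k • F k) (F m) = a m := by
  simp [hF _ m]

lemma apply_sub_sum_smul_eq_zero (hF : ip.IsOrthonormal F) (x : V) {z : V}
    (hz : z ∈ span ℝ (Set.range F)) : ip (x - ∑ k, ip x (F k) • F k) z = 0 := by
  refine (Submodule.span_le (p := LinearMap.ker _)).2 ?_ hz
  rintro _ ⟨m, rfl⟩
  simp only [SetLike.mem_coe, LinearMap.mem_ker, map_sub, LinearMap.sub_apply,
    hF.apply_sum_smul, sub_self]

lemma eq_sum_smul (hpos : ∀ x, x ≠ 0 → 0 < ip x x) (hF : ip.IsOrthonormal F) {x : V}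
    (hx : x ∈ span ℝ (Set.range F)) : x = ∑ k, ip x (F k) • F k :=
  sub_eq_zero.1 <| eq_zero_of_apply_self_eq_zero_s18 hpos <|
    hF.apply_sub_sum_smul_eq_zero x (sub_mem hx <|
      Submodule.sum_smul_mem _ _ fun k _ => Submodule.subset_span ⟨k, rfl⟩)

lemma sum_diag_eq (hsymm : ∀ x y, ip x y = ip y x) (hpos : ∀ x, x ≠ 0 → 0 < ip x x)
    (hF : ip.IsOrthonormal F) (hFspan : ∀ x, x ∈ span ℝ (Set.range F))
    (hG : ip.IsOrthonormal G) (hGspan : ∀ x, x ∈ span ℝ (Set.range G))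
    (β : V →ₗ[ℝ] V →ₗ[ℝ] M) :
    ∑ k, β (F k) (F k) = ∑ m, β (G m) (G m) :=
  calc ∑ k, β (F k) (F k)
      = ∑ k, ∑ m, ip (F k) (G m) • β (F k) (G m) := by
        refine Finset.sum_congr rfl fun k _ => ?_
        conv_lhs => arg 2; rw [hG.eq_sum_smul hpos (hGspan (F k))]
        simp
    _ = ∑ m, β (∑ k, ip (G m) (F k) • F k) (G m) := by
        rw [Finset.sum_comm]
        simp [hsymm (G _)]
    _ = ∑ m, β (G m) (G m) := by
        simp_rw [← hF.eq_sum_smul hpos (hFspan _)]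

lemma trace_eq_sum {b : Module.Basis γ ℝ V} (hb : ip.IsOrthonormal b) (T : V →ₗ[ℝ] V) :
    LinearMap.trace ℝ V T = ∑ k, ip (T (b k)) (b k) := by
  have hrepr (x : V) (k : γ) : b.repr x k = ip x (b k) := by
    conv_rhs => rw [← b.sum_repr x]
    exact (hb.apply_sum_smul _ k).symm
  simp [LinearMap.trace_eq_matrix_trace ℝ b, Matrix.trace, LinearMap.toMatrix_apply, hrepr]

end IsOrthonormal

lemma trace_eq_sum_of_isOrthonormal (hsymm : ∀ x y, ip x y = ip y x)
    (hpos : ∀ x, x ≠ 0 → 0 < ip x x) {F : γ → V} {b : Module.Basis δ ℝ V}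
    (hb : ip.IsOrthonormal b)
    (hF : ip.IsOrthonormal F) (hFspan : ∀ x, x ∈ span ℝ (Set.range F)) (T : V →ₗ[ℝ] V) :
    LinearMap.trace ℝ V T = ∑ k, ip (T (F k)) (F k) := by
  rw [hb.trace_eq_sum T]
  exact hb.sum_diag_eq hsymm hpos b.mem_span hF hFspan (ip ∘ₗ T)

section LeviCivita

variable {L : Type*} [LieRing L] [LieAlgebra ℝ L]

/-- `A u v` is the Levi-Civita product `∇_u v` of the left-invariant metric `ip`
(Koszul formula). -/
def IsLeviCivitaProduct (ip : BilinForm ℝ L) (A : L →ₗ[ℝ] L →ₗ[ℝ] L) : Prop :=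
  ∀ u v w, 2 * ip (A u v) w = ip ⁅u, v⁆ w + ip ⁅w, u⁆ v + ip ⁅w, v⁆ u

lemma IsLeviCivitaProduct.apply_self {ip : BilinForm ℝ L} {A : L →ₗ[ℝ] L →ₗ[ℝ] L}
    (hA : ip.IsLeviCivitaProduct A) (u w : L) : ip (A u u) w = ip ⁅w, u⁆ u := by
  have h := hA u u w
  rw [lie_self, map_zero, LinearMap.zero_apply] at h
  linarith

lemma IsLeviCivitaProduct.unique {ip : BilinForm ℝ L} (hpos : ∀ x, x ≠ 0 → 0 < ip x x)
    {A B : L →ₗ[ℝ] L →ₗ[ℝ] L} (hA : ip.IsLeviCivitaProduct A)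
    (hB : ip.IsLeviCivitaProduct B) : A = B := by
  ext u v
  exact eq_of_forall_apply_eq hpos fun w => by linarith [hA u v w, hB u v w]

end LeviCivita

end LinearMap.BilinForm

section Submersion

open LinearMap.BilinForm

variable {g h M : Type*} [AddCommGroup g] [Module ℝ g] [AddCommGroup h] [Module ℝ h]
  [AddCommGroup M] [Module ℝ M]
  {ipg : BilinForm ℝ g} {iph : BilinForm ℝ h} {π : g →ₗ[ℝ] h}
  {ι κ : Type*} {f : ι → g} {c : κ → h} {e : κ → g}

variable (ipg π) in
def horizontal : Submodule ℝ g where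
  carrier := {x | ∀ z, π z = 0 → ipg x z = 0}
  add_mem' hx hy z hz := by simp [hx z hz, hy z hz]
  zero_mem' := by simp
  smul_mem' a x hx z hz := by simp [hx z hz]

lemma map_sub_sum_smul (hf0 : ∀ i, π (f i) = 0) (x : g) (s : Finset ι) (a : ι → ℝ) :
    π (x - ∑ i ∈ s, a i • f i) = π x := by
  simp [hf0]

variable [DecidableEq ι] [DecidableEq κ]

lemma isOrthonormal_sum_elim (hsymm : ∀ x y, ipg x y = ipg y x)
    (hiso : ∀ x y, x ∈ horizontal ipg π → y ∈ horizontal ipg π → iph (π x) (π y) = ipg x y)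
    (hf0 : ∀ i, π (f i) = 0) (hf : ipg.IsOrthonormal f) (hc : iph.IsOrthonormal c)
    (he : ∀ j, e j ∈ horizontal ipg π) (hπe : ∀ j, π (e j) = c j) :
    ipg.IsOrthonormal (Sum.elim f e) := by
  rintro (i | i) (j | j)
  · simp [hf i j]
  · simp [hsymm (f i), he j _ (hf0 i)]
  · simp [he i _ (hf0 j)]
  · simp [← hiso _ _ (he i) (he j), hπe, hc i j]

variable [Fintype ι] [Fintype κ]

lemma sub_sum_smul_mem_horizontal (hf : ipg.IsOrthonormal f)
    (hfspan : ∀ z, π z = 0 → z ∈ span ℝ (Set.range f)) (x : g) :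
    x - ∑ i, ipg x (f i) • f i ∈ horizontal ipg π :=
  fun _ hz => hf.apply_sub_sum_smul_eq_zero x (hfspan _ hz)

lemma exists_mem_horizontal_map_eq (hsurj : Function.Surjective π) (hf0 : ∀ i, π (f i) = 0)
    (hf : ipg.IsOrthonormal f) (hfspan : ∀ z, π z = 0 → z ∈ span ℝ (Set.range f)) (y : h) :
    ∃ x ∈ horizontal ipg π, π x = y := by
  obtain ⟨x, rfl⟩ := hsurj y
  exact ⟨_, sub_sum_smul_mem_horizontal hf hfspan x, map_sub_sum_smul hf0 x _ _⟩

lemma apply_map_map_of_mem_horizontal (hsymm : ∀ x y, ipg x y = ipg y x)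
    (hf0 : ∀ i, π (f i) = 0) (hf : ipg.IsOrthonormal f)
    (hfspan : ∀ z, π z = 0 → z ∈ span ℝ (Set.range f))
    (hiso : ∀ x y, x ∈ horizontal ipg π → y ∈ horizontal ipg π → iph (π x) (π y) = ipg x y)
    (x : g) {y : g} (hy : y ∈ horizontal ipg π) : iph (π x) (π y) = ipg x y :=
  calc iph (π x) (π y) = iph (π (x - ∑ i, ipg x (f i) • f i)) (π y) := by
        rw [map_sub_sum_smul hf0]
    _ = ipg (x - ∑ i, ipg x (f i) • f i) y :=
        hiso _ _ (sub_sum_smul_mem_horizontal hf hfspan x) hy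
    _ = ipg x y := by simp [hsymm (f _) y, hy _ (hf0 _)]

lemma mem_span_sum_elim (hgpos : ∀ x, x ≠ 0 → 0 < ipg x x) (hhpos : ∀ y, y ≠ 0 → 0 < iph y y)
    (hf : ipg.IsOrthonormal f)
    (hfspan : ∀ z, π z = 0 → z ∈ span ℝ (Set.range f)) (hc : iph.IsOrthonormal c)
    (hcspan : ∀ y, y ∈ span ℝ (Set.range c)) (he : ∀ j, e j ∈ horizontal ipg π)
    (hπe : ∀ j, π (e j) = c j) (x : g) : x ∈ span ℝ (Set.range (Sum.elim f e)) := by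
  have hhor : ∀ v ∈ horizontal ipg π, v = ∑ j, iph (π v) (c j) • e j := by
    intro v hv
    have hmem : v - ∑ j, iph (π v) (c j) • e j ∈ horizontal ipg π :=
      sub_mem hv (Submodule.sum_smul_mem _ _ fun j _ => he j)
    have hker : π (v - ∑ j, iph (π v) (c j) • e j) = 0 := by
      simp only [map_sub, map_sum, map_smul, hπe]
      exact sub_eq_zero.2 (hc.eq_sum_smul hhpos (hcspan _))
    exact sub_eq_zero.1 (eq_zero_of_apply_self_eq_zero_s18 hgpos (hmem _ hker))
  rw [← sub_add_cancel x (∑ i, ipg x (f i) • f i),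
    hhor _ (sub_sum_smul_mem_horizontal hf hfspan x)]
  exact add_mem (Submodule.sum_smul_mem _ _ fun j _ => Submodule.subset_span ⟨Sum.inr j, rfl⟩)
    (Submodule.sum_smul_mem _ _ fun i _ => Submodule.subset_span ⟨Sum.inl i, rfl⟩)

lemma sum_diag_map_eq {γ : Type*} [Fintype γ] [DecidableEq γ]
    (hsymm : ∀ x y, ipg x y = ipg y x) (hpos : ∀ x, x ≠ 0 → 0 < ipg x x)
    {b : γ → g} (hb : ipg.IsOrthonormal b) (hbspan : ∀ x, x ∈ span ℝ (Set.range b))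
    (hF : ipg.IsOrthonormal (Sum.elim f e)) (hFspan : ∀ x, x ∈ span ℝ (Set.range (Sum.elim f e)))
    (hf0 : ∀ i, π (f i) = 0) (hπe : ∀ j, π (e j) = c j) (β : h →ₗ[ℝ] h →ₗ[ℝ] M) :
    ∑ k, β (π (b k)) (π (b k)) = ∑ j, β (c j) (c j) := by
  simpa [Fintype.sum_sum_type, hf0, hπe] using
    hb.sum_diag_eq hsymm hpos hbspan hF hFspan (β.compl₁₂ π π)

end Submersion

section LieAlgebra

open LinearMap.BilinForm LieAlgebra

variable {g h : Type*} [LieRing g] [LieAlgebra ℝ g] [LieRing h] [LieAlgebra ℝ h]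
  {ipg : BilinForm ℝ g} {iph : BilinForm ℝ h}
  {ι κ : Type*} [Fintype ι] [Fintype κ] {f : ι → g} {c : κ → h} {e : κ → g}

lemma map_eq_sum_leviCivita_add {π : g →ₗ⁅ℝ⁆ h} {A : h →ₗ[ℝ] h →ₗ[ℝ] h} {U : g} {Hρ : h}
    (hhpos : ∀ y, y ≠ 0 → 0 < iph y y)
    (hiso : ∀ x y, y ∈ horizontal ipg π.toLinearMap → iph (π x) (π y) = ipg x y)
    (hlift : ∀ y, ∃ x ∈ horizontal ipg π.toLinearMap, π x = y)
    (hA : iph.IsLeviCivitaProduct A)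
    (he : ∀ j, e j ∈ horizontal ipg π.toLinearMap) (hπe : ∀ j, π (e j) = c j)
    (htrace : ∀ v, LinearMap.trace ℝ g (ad ℝ g v) =
      ∑ i, ipg ⁅v, f i⁆ (f i) + ∑ j, ipg ⁅v, e j⁆ (e j))
    (hU : ∀ v, ipg U v = LinearMap.trace ℝ g (ad ℝ g v))
    (hHρ : ∀ u ∈ horizontal ipg π.toLinearMap, iph Hρ (π u) = ∑ i, ipg ⁅u, f i⁆ (f i)) :
    π U = ∑ j, A (c j) (c j) + Hρ := by
  refine eq_of_forall_apply_eq hhpos fun w => ?_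
  obtain ⟨u, hu, rfl⟩ := hlift w
  have hbracket (j : κ) : ipg ⁅u, e j⁆ (e j) = iph (A (c j) (c j)) (π u) := by
    rw [← hiso _ _ (he j), LieHom.map_lie, hπe, hA.apply_self]
  calc iph (π U) (π u) = ipg U u := hiso U u hu
    _ = ∑ i, ipg ⁅u, f i⁆ (f i) + ∑ j, ipg ⁅u, e j⁆ (e j) := by rw [hU, htrace]
    _ = iph (∑ j, A (c j) (c j) + Hρ) (π u) := by simp [hHρ u hu, hbracket, add_comm]

variable [DecidableEq ι] [DecidableEq κ]

lemma trace_ad_eq_sum_add_sum {γ : Type*} [Fintype γ] [DecidableEq γ]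
    (hsymm : ∀ x y, ipg x y = ipg y x) (hpos : ∀ x, x ≠ 0 → 0 < ipg x x)
    {b : Module.Basis γ ℝ g} (hb : ipg.IsOrthonormal b) (hF : ipg.IsOrthonormal (Sum.elim f e))
    (hFspan : ∀ x, x ∈ span ℝ (Set.range (Sum.elim f e))) (v : g) :
    LinearMap.trace ℝ g (ad ℝ g v) = ∑ i, ipg ⁅v, f i⁆ (f i) + ∑ j, ipg ⁅v, e j⁆ (e j) := by
  rw [trace_eq_sum_of_isOrthonormal hsymm hpos hb hF hFspan, Fintype.sum_sum_type]
  rfl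

end LieAlgebra

theorem stmt_18_general {g h : Type*}
    [LieRing g] [LieAlgebra ℝ g]
    [LieRing h] [LieAlgebra ℝ h]
    {ι κ κ' : Type*} [Fintype ι] [DecidableEq ι] [Fintype κ] [DecidableEq κ]
    [Fintype κ'] [DecidableEq κ']
    (ipg : LinearMap.BilinForm ℝ g)
    (hgsymm : ∀ x y : g, ipg x y = ipg y x)
    (hgpos : ∀ x : g, x ≠ 0 → 0 < ipg x x)
    (iph1 iph2 : LinearMap.BilinForm ℝ h)
    (h1pos : ∀ x : h, x ≠ 0 → 0 < iph1 x x)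
    (π : g →ₗ⁅ℝ⁆ h) (hsurj : Function.Surjective π)
    -- iph1 is the submersion metric: π is a Riemannian submersion (𝔤,ipg) → (𝔥,iph1)
    (hiso : ∀ x y : g, (∀ z : g, π z = 0 → ipg x z = 0) →
      (∀ z : g, π z = 0 → ipg y z = 0) → iph1 (π x) (π y) = ipg x y)
    (A1 : h →ₗ[ℝ] h →ₗ[ℝ] h)
    (hA1 : ∀ u v w : h, 2 * iph1 (A1 u v) w = iph1 ⁅u, v⁆ w + iph1 ⁅w, u⁆ v + iph1 ⁅w, v⁆ u)
    (B : h →ₗ[ℝ] h →ₗ[ℝ] h)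
    (hB : ∀ u v w : h, 2 * iph2 (B u v) w = iph2 ⁅u, v⁆ w + iph2 ⁅w, u⁆ v + iph2 ⁅w, v⁆ u)
    -- (f i) is an orthonormal basis of 𝔫 = ker π
    (f : ι → g) (hf0 : ∀ i, π (f i) = 0)
    (hforth : ∀ i j, ipg (f i) (f j) = if i = j then 1 else 0)
    (hfspan : ∀ z : g, π z = 0 → z ∈ Submodule.span ℝ (Set.range f))
    (b : Module.Basis κ ℝ g)
    (hb : ∀ i j, ipg (b i) (b j) = if i = j then 1 else 0)
    (c : Module.Basis κ' ℝ h)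
    (hc : ∀ i j, iph1 (c i) (c j) = if i = j then 1 else 0)
    -- H is the mean curvature vector of ker π ⊂ 𝔤
    (H : g)
    (hH : ∀ v : g, (∀ z : g, π z = 0 → ipg v z = 0) →
      ipg H v = ∑ i, ipg ⁅v, f i⁆ (f i))
    -- H^ρ ∈ 𝔥 is defined by ⟨H^ρ, h'⟩₁ = tr(ρ(h'))
    (Hρ : h) (hHρ : ∀ u : g, (∀ z : g, π z = 0 → ipg u z = 0) →
      iph1 Hρ (π u) = ∑ i, ipg ⁅u, f i⁆ (f i))
    -- τId is the tension of Id : (𝔥,iph1) → (𝔥,iph2)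
    (τId : h) (hτId : τId = ∑ j, (B (c j) (c j) - A1 (c j) (c j)))
    (Ug : g) (hUg : ∀ v : g, ipg Ug v = LinearMap.trace ℝ g (LieAlgebra.ad ℝ g v)) :
    (∀ u : g, (∀ z : g, π z = 0 → ipg u z = 0) →
      iph1 (π H) (π u) = ∑ i, ipg ⁅u, f i⁆ (f i)) ∧
    ((∑ k, B (π (b k)) (π (b k))) - π Ug = τId - Hρ) ∧
    ((∀ u : g, (∀ z : g, π z = 0 → ipg u z = 0) → (∑ i, ipg ⁅u, f i⁆ (f i)) = 0) →
      iph1 = iph2 → (∑ k, B (π (b k)) (π (b k))) - π Ug = 0) := by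
  have hiso' (x y : g) (hy : y ∈ horizontal ipg π.toLinearMap) :
      iph1 (π x) (π y) = ipg x y :=
    apply_map_map_of_mem_horizontal hgsymm hf0 hforth hfspan hiso x hy
  have hlift := exists_mem_horizontal_map_eq hsurj hf0 hforth hfspan
  choose e he hπe using fun j => hlift (c j)
  have hF := isOrthonormal_sum_elim hgsymm hiso hf0 hforth hc he hπe
  have hFspan := mem_span_sum_elim hgpos h1pos hforth hfspan hc
    c.mem_span he hπe
  have hUg_map : π Ug = ∑ j, A1 (c j) (c j) + Hρ :=
    map_eq_sum_leviCivita_add h1pos hiso' hlift hA1 he hπe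
      (trace_ad_eq_sum_add_sum hgsymm hgpos hb hF hFspan) hUg hHρ
  have hB_sum : ∑ k, B (π (b k)) (π (b k)) = ∑ j, B (c j) (c j) :=
    sum_diag_map_eq hgsymm hgpos hb b.mem_span hF hFspan
      hf0 hπe B
  have hτ : (∑ k, B (π (b k)) (π (b k))) - π Ug = τId - Hρ := by
    rw [hB_sum, hUg_map, hτId, Finset.sum_sub_distrib]
    abel
  refine ⟨fun u hu => by rw [hiso' H u hu, hH u hu], hτ, fun htr h12 => ?_⟩
  have hHρ0 : Hρ = 0 := LinearMap.BilinForm.eq_of_forall_apply_eq h1pos fun w => by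
    obtain ⟨u, hu, rfl⟩ := hlift w
    simp [hHρ u hu, htr u hu]
  have hBA : B = A1 := LinearMap.BilinForm.IsLeviCivitaProduct.unique h1pos (h12 ▸ hB) hA1
  rw [hτ, hτId, hHρ0, hBA]
  simp

/-- For the semidirect-product situation (ω = 0): a Riemannian submersion π : 𝔤 → 𝔥
(with 𝔥 carrying a second metric iph2), the mean curvature H of ker π satisfies
⟨π(H), h'⟩ = tr(ρ(h')), the tension satisfies τ(π) = τ(Id_𝔥) − H^ρ, and if
tr(ρ(h')) = 0 for all h' and the two metrics on 𝔥 coincide then π is harmonic. -/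
theorem stmt_18 {g h : Type*}
    [LieRing g] [LieAlgebra ℝ g] [FiniteDimensional ℝ g]
    [LieRing h] [LieAlgebra ℝ h] [FiniteDimensional ℝ h]
    {ι κ κ' : Type*} [Fintype ι] [DecidableEq ι] [Fintype κ] [DecidableEq κ]
    [Fintype κ'] [DecidableEq κ']
    (ipg : LinearMap.BilinForm ℝ g)
    (hgsymm : ∀ x y : g, ipg x y = ipg y x)
    (hgpos : ∀ x : g, x ≠ 0 → 0 < ipg x x)
    (iph1 iph2 : LinearMap.BilinForm ℝ h)
    (h1symm : ∀ x y : h, iph1 x y = iph1 y x)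
    (h1pos : ∀ x : h, x ≠ 0 → 0 < iph1 x x)
    (h2symm : ∀ x y : h, iph2 x y = iph2 y x)
    (h2pos : ∀ x : h, x ≠ 0 → 0 < iph2 x x)
    (π : g →ₗ⁅ℝ⁆ h) (hsurj : Function.Surjective π)
    -- iph1 is the submersion metric: π is a Riemannian submersion (𝔤,ipg) → (𝔥,iph1)
    (hiso : ∀ x y : g, (∀ z : g, π z = 0 → ipg x z = 0) →
      (∀ z : g, π z = 0 → ipg y z = 0) → iph1 (π x) (π y) = ipg x y)
    -- ω = 0 : the horizontal space (ker π)^⊥ is a subalgebra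
    (hω : ∀ x y : g, (∀ z : g, π z = 0 → ipg x z = 0) →
      (∀ z : g, π z = 0 → ipg y z = 0) → ∀ z : g, π z = 0 → ipg ⁅x, y⁆ z = 0)
    (A : g →ₗ[ℝ] g →ₗ[ℝ] g)
    (hA : ∀ u v w : g, 2 * ipg (A u v) w = ipg ⁅u, v⁆ w + ipg ⁅w, u⁆ v + ipg ⁅w, v⁆ u)
    (A1 : h →ₗ[ℝ] h →ₗ[ℝ] h)
    (hA1 : ∀ u v w : h, 2 * iph1 (A1 u v) w = iph1 ⁅u, v⁆ w + iph1 ⁅w, u⁆ v + iph1 ⁅w, v⁆ u)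
    (B : h →ₗ[ℝ] h →ₗ[ℝ] h)
    (hB : ∀ u v w : h, 2 * iph2 (B u v) w = iph2 ⁅u, v⁆ w + iph2 ⁅w, u⁆ v + iph2 ⁅w, v⁆ u)
    -- (f i) is an orthonormal basis of 𝔫 = ker π
    (f : ι → g) (hf0 : ∀ i, π (f i) = 0)
    (hforth : ∀ i j, ipg (f i) (f j) = if i = j then 1 else 0)
    (hfspan : ∀ z : g, π z = 0 → z ∈ Submodule.span ℝ (Set.range f))
    (b : Module.Basis κ ℝ g)
    (hb : ∀ i j, ipg (b i) (b j) = if i = j then 1 else 0)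
    (c : Module.Basis κ' ℝ h)
    (hc : ∀ i j, iph1 (c i) (c j) = if i = j then 1 else 0)
    -- H is the mean curvature vector of ker π ⊂ 𝔤
    (H : g) (hHperp : ∀ z : g, π z = 0 → ipg H z = 0)
    (hH : ∀ v : g, (∀ z : g, π z = 0 → ipg v z = 0) →
      ipg H v = ∑ i, ipg ⁅v, f i⁆ (f i))
    -- H^ρ ∈ 𝔥 is defined by ⟨H^ρ, h'⟩₁ = tr(ρ(h'))
    (Hρ : h) (hHρ : ∀ u : g, (∀ z : g, π z = 0 → ipg u z = 0) →
      iph1 Hρ (π u) = ∑ i, ipg ⁅u, f i⁆ (f i))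
    -- τId is the tension of Id : (𝔥,iph1) → (𝔥,iph2)
    (τId : h) (hτId : τId = ∑ j, (B (c j) (c j) - A1 (c j) (c j)))
    (Ug : g) (hUg : ∀ v : g, ipg Ug v = LinearMap.trace ℝ g (LieAlgebra.ad ℝ g v)) :
    (∀ u : g, (∀ z : g, π z = 0 → ipg u z = 0) →
      iph1 (π H) (π u) = ∑ i, ipg ⁅u, f i⁆ (f i)) ∧
    ((∑ k, B (π (b k)) (π (b k))) - π Ug = τId - Hρ) ∧
    ((∀ u : g, (∀ z : g, π z = 0 → ipg u z = 0) → (∑ i, ipg ⁅u, f i⁆ (f i)) = 0) →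
      iph1 = iph2 → (∑ k, B (π (b k)) (π (b k))) - π Ug = 0) :=
  stmt_18_general ipg hgsymm hgpos iph1 iph2 h1pos π hsurj hiso A1 hA1 B hB f hf0 hforth hfspan b hb
    c hc H hH Hρ hHρ τId hτId Ug hUg
end

section
/- Let ξ : 𝔤 → 𝔥 be a Lie algebra homomorphism between Euclidean Lie algebras with 𝔥 2-step nilpotent and 𝔤 unimodular. If ad_{U^ξ} ∘ ξ = 0, then U^ξ = 0 and ξ is harmonic (i.e. τ(ξ) = U^ξ = 0). -/
/-- If 𝔥 is 2-step nilpotent, 𝔤 is unimodular, and ad_{U^ξ} ∘ ξ = 0, then U^ξ = 0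
and ξ is harmonic: τ(ξ) = U^ξ − ξ(U^𝔤) = 0. -/
theorem stmt_19 {g h : Type*}
    [LieRing g] [LieAlgebra ℝ g] [FiniteDimensional ℝ g]
    [LieRing h] [LieAlgebra ℝ h] [FiniteDimensional ℝ h]
    {ι : Type*} [Fintype ι] [DecidableEq ι]
    (ipg : LinearMap.BilinForm ℝ g)
    (hgsymm : ∀ x y : g, ipg x y = ipg y x)
    (hgpos : ∀ x : g, x ≠ 0 → 0 < ipg x x)
    (iph : LinearMap.BilinForm ℝ h)
    (hhsymm : ∀ x y : h, iph x y = iph y x)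
    (hhpos : ∀ x : h, x ≠ 0 → 0 < iph x x)
    (ξ : g →ₗ⁅ℝ⁆ h)
    (hnil : ∀ x y z : h, ⁅x, ⁅y, z⁆⁆ = 0)
    (hgun : ∀ v : g, LinearMap.trace ℝ g (LieAlgebra.ad ℝ g v) = 0)
    (B : h →ₗ[ℝ] h →ₗ[ℝ] h)
    (hB : ∀ u v w : h, 2 * iph (B u v) w = iph ⁅u, v⁆ w + iph ⁅w, u⁆ v + iph ⁅w, v⁆ u)
    (b : Module.Basis ι ℝ g)
    (hb : ∀ i j, ipg (b i) (b j) = if i = j then 1 else 0)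
    (Uξ : h) (hUξ : Uξ = ∑ i, B (ξ (b i)) (ξ (b i)))
    (Ug : g) (hUg : ∀ v : g, ipg Ug v = LinearMap.trace ℝ g (LieAlgebra.ad ℝ g v))
    (hkey : ∀ x : g, ⁅Uξ, ξ x⁆ = 0) :
    Uξ = 0 ∧ Uξ - ξ Ug = 0 := by
  have hU0 : ∀ i, iph (B (ξ (b i)) (ξ (b i))) Uξ = 0 := by
    intro i
    have h2 := hB (ξ (b i)) (ξ (b i)) Uξ
    rw [lie_self, hkey (b i)] at h2
    simp at h2
    linarith
  have h1 : iph Uξ Uξ = 0 := by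
    nth_rewrite 1 [hUξ]
    simp [map_sum, LinearMap.sum_apply, hU0]
  have hU : Uξ = 0 := by
    by_contra hne
    exact absurd h1 (ne_of_gt (hhpos _ hne))
  have hUg0 : Ug = 0 := by
    by_contra hne
    have := hUg Ug
    rw [hgun] at this
    exact absurd this (ne_of_gt (hgpos _ hne))
  refine ⟨hU, ?_⟩
  rw [hU, hUg0, map_zero ξ, sub_zero]
end
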